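/- arXiv:2311.02611 — 10 statements merged into one kernel-verified Lean document; each statement's English description precedes it below -/
import Mathlib

section
/- Let L > 0 and 0 ≤ x₀ < L/2. Define f(ν) = -(ν/2)·(cot((ν/2)(L/2 - x₀)) + cot((ν/2)(L/2 + x₀))) for ν > 0 not in the set P = {2kπ/(L/2 + x₀) : k ∈ ℕ} ∪ {2lπ/(L/2 - x₀) : l ∈ ℕ}. Then f is strictly increasing on each connected component of its domain in (0,∞). -/
/-!
Each cotangent term `g_c ν = -(ν/2) cot (ν c / 2)` with `c > 0` has derivative
`(u - sin u cos u) / (2 sin² u)` at `u = ν c / 2`, which is positive for `u > 0` because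
`sin 2u < 2u`. Hence `g_c` is strictly increasing on every interval of `(0, ∞)` free of its poles
`2kπ/c`, and so is `f = g_{L/2 - x₀} + g_{L/2 + x₀}`.
-/

open Real Set

noncomputable def negHalfMulCot (c ν : ℝ) : ℝ :=
  -(ν / 2) * (cos (ν / 2 * c) / sin (ν / 2 * c))

lemma sub_sin_mul_cos_pos {u : ℝ} (hu : 0 < u) : 0 < u - sin u * cos u := by
  have h := sin_lt (by linarith : 0 < 2 * u)
  rw [sin_two_mul] at h
  linarith

lemma hasDerivAt_negHalfMulCot (c : ℝ) {x : ℝ} (hs : sin (x / 2 * c) ≠ 0) :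
    HasDerivAt (negHalfMulCot c)
      ((x / 2 * c - sin (x / 2 * c) * cos (x / 2 * c)) / (2 * sin (x / 2 * c) ^ 2)) x := by
  have hu : HasDerivAt (fun ν : ℝ => ν / 2 * c) (1 / 2 * c) x := by
    simpa using ((hasDerivAt_id x).div_const 2).mul_const c
  have hm : HasDerivAt (fun ν : ℝ => -(ν / 2)) (-(1 / 2)) x := by
    simpa [neg_div] using (hasDerivAt_neg x).div_const 2
  refine (hm.mul (hu.cos.div hu.sin hs)).congr_deriv ?_
  have hpyth := sin_sq_add_cos_sq (x / 2 * c)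
  simp only [Pi.div_apply]
  set u := x / 2 * c
  field_simp
  linear_combination x * c * hpyth

lemma strictMonoOn_negHalfMulCot {c : ℝ} (hc : 0 < c) {s : Set ℝ} (hconv : Convex ℝ s)
    (hpos : s ⊆ Ioi 0) (hs : ∀ ν ∈ s, sin (ν / 2 * c) ≠ 0) :
    StrictMonoOn (negHalfMulCot c) s := by
  refine strictMonoOn_of_deriv_pos hconv
    (fun x hx => (hasDerivAt_negHalfMulCot c (hs x hx)).continuousAt.continuousWithinAt)
    (fun x hx => ?_)
  have hx' := interior_subset hx
  have hu : 0 < x / 2 * c := by have : 0 < x := hpos hx'; positivity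
  have hsq : 0 < 2 * sin (x / 2 * c) ^ 2 := by have := hs x hx'; positivity
  rw [(hasDerivAt_negHalfMulCot c (hs x hx')).deriv]
  exact div_pos (sub_sin_mul_cos_pos hu) hsq

lemma sin_half_mul_ne_zero {c ν : ℝ} (hc : 0 < c) (hν : 0 < ν)
    (hpole : ∀ k : ℕ, 0 < k → ν ≠ 2 * k * π / c) : sin (ν / 2 * c) ≠ 0 := by
  intro h
  obtain ⟨n, hn⟩ := sin_eq_zero_iff.mp h
  have hn0 : 0 < n := by
    have : (0 : ℝ) < n * π := by rw [hn]; positivity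
    exact_mod_cast pos_of_mul_pos_left this pi_pos.le
  refine hpole n.toNat (by omega) ?_
  have hcast : (n.toNat : ℝ) = n := by exact_mod_cast Int.toNat_of_nonneg hn0.le
  rw [hcast]
  field_simp
  linarith

theorem stmt_2_general (L x₀ : ℝ) (hx₀ : 0 ≤ x₀) (hx₀' : x₀ < L/2)
    (P : Set ℝ)
    (hP : P = {ν : ℝ | ∃ k : ℕ, 0 < k ∧
      (ν = 2*k*π/(L/2 + x₀) ∨ ν = 2*k*π/(L/2 - x₀))})
    (f : ℝ → ℝ)
    (hf : ∀ ν, f ν = -(ν/2) * (Real.cos (ν/2*(L/2 - x₀)) / Real.sin (ν/2*(L/2 - x₀))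
        + Real.cos (ν/2*(L/2 + x₀)) / Real.sin (ν/2*(L/2 + x₀)))) :
    ∀ a b : ℝ, 0 < a → a < b → (∀ ν ∈ Set.Icc a b, ν ∉ P) → f a < f b := by
  intro a b ha hab hnot
  subst hP
  have hpos : Icc a b ⊆ Ioi 0 := fun ν hν => ha.trans_le hν.1
  have h₁ : StrictMonoOn (negHalfMulCot (L/2 - x₀)) (Icc a b) :=
    strictMonoOn_negHalfMulCot (by linarith) (convex_Icc a b) hpos fun ν hν =>
      sin_half_mul_ne_zero (by linarith) (hpos hν) fun k hk h => hnot ν hν ⟨k, hk, .inr h⟩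
  have h₂ : StrictMonoOn (negHalfMulCot (L/2 + x₀)) (Icc a b) :=
    strictMonoOn_negHalfMulCot (by linarith) (convex_Icc a b) hpos fun ν hν =>
      sin_half_mul_ne_zero (by linarith) (hpos hν) fun k hk h => hnot ν hν ⟨k, hk, .inl h⟩
  have hsum : ∀ ν, f ν = negHalfMulCot (L/2 - x₀) ν + negHalfMulCot (L/2 + x₀) ν := by
    intro ν
    rw [hf, negHalfMulCot, negHalfMulCot]
    ring
  rw [hsum, hsum]
  exact h₁.add h₂ (left_mem_Icc.mpr hab.le) (right_mem_Icc.mpr hab.le) hab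

theorem stmt_2 (L x₀ : ℝ) (hL : 0 < L) (hx₀ : 0 ≤ x₀) (hx₀' : x₀ < L/2)
    (P : Set ℝ)
    (hP : P = {ν : ℝ | ∃ k : ℕ, 0 < k ∧
      (ν = 2*k*π/(L/2 + x₀) ∨ ν = 2*k*π/(L/2 - x₀))})
    (f : ℝ → ℝ)
    (hf : ∀ ν, f ν = -(ν/2) * (Real.cos (ν/2*(L/2 - x₀)) / Real.sin (ν/2*(L/2 - x₀))
        + Real.cos (ν/2*(L/2 + x₀)) / Real.sin (ν/2*(L/2 + x₀)))) :
    ∀ a b : ℝ, 0 < a → a < b → (∀ ν ∈ Set.Icc a b, ν ∉ P) → f a < f b :=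
  stmt_2_general L x₀ hx₀ hx₀' P hP f hf
end

section
/- Let L > 0 and 0 ≤ x₀ < L/2, and define f(ν) = -(ν/2)·sin(νL/2) / (sin((ν/2)(L/2 + x₀))·sin((ν/2)(L/2 - x₀))). Then for any k ∈ ℕ, as ν approaches ν̲ₖ = 2kπ/(L/2 + x₀) from below, f(ν) → +∞, and as ν approaches ν̲ₖ from above, f(ν) → -∞. -/
open Real Set Filter

-- core lemma: one-sided blow-up of -(ν/2)·cot(ν/2·c) at a zero t₀ of sin(t₀/2·c)
theorem cot_blowup (c t₀ : ℝ) (hc : 0 < c) (ht : 0 < t₀)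
    (hs : Real.sin (t₀/2*c) = 0) :
    Tendsto (fun ν => -(ν/2) * Real.cos (ν/2*c) / Real.sin (ν/2*c)) (nhdsWithin t₀ (Set.Iio t₀)) atTop ∧
    Tendsto (fun ν => -(ν/2) * Real.cos (ν/2*c) / Real.sin (ν/2*c)) (nhdsWithin t₀ (Set.Ioi t₀)) atBot := by
  set ε := Real.cos (t₀/2*c) with hε
  have hε2 : ε * ε = 1 := by
    have := Real.sin_sq_add_cos_sq (t₀/2*c)
    nlinarith [hs]
  have hεpm : ε = 1 ∨ ε = -1 := mul_self_eq_one_iff.mp hε2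
  -- identity: sin(ν/2*c) = -ε * sin((t₀-ν)/2*c)
  have hid : ∀ ν : ℝ, Real.sin (ν/2*c) = -ε * Real.sin ((t₀-ν)/2*c) := by
    intro ν
    have : ν/2*c = t₀/2*c - (t₀-ν)/2*c := by ring
    rw [this, Real.sin_sub, hs]
    ring
  -- numerator tendsto
  have hnum : ∀ l : Filter ℝ, l ≤ nhds t₀ →
      Tendsto (fun ν : ℝ => ν/2 * Real.cos (ν/2*c) * ε) l (nhds (t₀/2)) := by
    intro l hl
    have hcont : ContinuousAt (fun ν : ℝ => ν/2 * Real.cos (ν/2*c) * ε) t₀ := by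
      fun_prop
    have : (t₀/2 * Real.cos (t₀/2*c) * ε) = t₀/2 := by
      rw [← hε]; nlinarith [hε2]
    have htt := hcont.tendsto
    rw [show (t₀/2 * Real.cos (t₀/2*c) * ε) = t₀/2 from this] at htt
    exact htt.mono_left hl
  have ht2 : 0 < t₀/2 := by linarith
  -- sin tends to 0 from above along 𝓝[>] 0
  have hsin0 : Tendsto Real.sin (nhdsWithin 0 (Set.Ioi (0:ℝ))) (nhdsWithin 0 (Set.Ioi (0:ℝ))) := by
    rw [tendsto_nhdsWithin_iff]
    constructor
    · exact (Real.continuous_sin.tendsto 0).mono_left nhdsWithin_le_nhds |>.congr' (by simp) |>.congr (fun x => rfl) |>.mono_right (by simp [Real.sin_zero])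
    · filter_upwards [Ioo_mem_nhdsGT_of_mem (Set.mem_Ico.mpr ⟨le_refl (0:ℝ), Real.pi_pos⟩)] with x hx
      exact Real.sin_pos_of_pos_of_lt_pi hx.1 hx.2
  constructor
  · -- from below
    have hden : Tendsto (fun ν : ℝ => Real.sin ((t₀-ν)/2*c)) (nhdsWithin t₀ (Set.Iio t₀)) (nhdsWithin 0 (Set.Ioi (0:ℝ))) := by
      apply hsin0.comp
      rw [tendsto_nhdsWithin_iff]
      constructor
      · have : ContinuousAt (fun ν : ℝ => (t₀-ν)/2*c) t₀ := by fun_prop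
        have h0 : (t₀-t₀)/2*c = 0 := by ring
        exact (this.tendsto.mono_left nhdsWithin_le_nhds).mono_right (by rw [h0])
      · filter_upwards [self_mem_nhdsWithin] with x hx
        have h1 : x < t₀ := hx
        have : 0 < (t₀ - x)/2*c := mul_pos (by linarith) hc
        exact this
    have hinv : Tendsto (fun ν : ℝ => (Real.sin ((t₀-ν)/2*c))⁻¹) (nhdsWithin t₀ (Set.Iio t₀)) atTop :=
      tendsto_inv_nhdsGT_zero.comp hden
    have := (hnum _ nhdsWithin_le_nhds).pos_mul_atTop ht2 hinv
    refine this.congr (fun ν => ?_)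
    rw [hid ν]
    rcases hεpm with h | h <;> simp [h] <;> ring_nf <;> rw [div_eq_mul_inv] <;> ring
  · -- from above
    have hid' : ∀ ν : ℝ, Real.sin (ν/2*c) = ε * Real.sin ((ν-t₀)/2*c) := by
      intro ν
      rw [hid ν, show (t₀-ν)/2*c = -((ν-t₀)/2*c) by ring, Real.sin_neg]
      ring
    have hden : Tendsto (fun ν : ℝ => Real.sin ((ν-t₀)/2*c)) (nhdsWithin t₀ (Set.Ioi t₀)) (nhdsWithin 0 (Set.Ioi (0:ℝ))) := by
      apply hsin0.comp
      rw [tendsto_nhdsWithin_iff]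
      constructor
      · have : ContinuousAt (fun ν : ℝ => (ν-t₀)/2*c) t₀ := by fun_prop
        have h0 : (t₀-t₀)/2*c = 0 := by ring
        exact (this.tendsto.mono_left nhdsWithin_le_nhds).mono_right (by rw [show (t₀-t₀)/2*c = 0 by ring])
      · filter_upwards [self_mem_nhdsWithin] with x hx
        have h1 : t₀ < x := hx
        have : 0 < (x - t₀)/2*c := mul_pos (by linarith) hc
        exact this
    have hinv : Tendsto (fun ν : ℝ => (Real.sin ((ν-t₀)/2*c))⁻¹) (nhdsWithin t₀ (Set.Ioi t₀)) atTop :=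
      tendsto_inv_nhdsGT_zero.comp hden
    have h1 := (hnum _ nhdsWithin_le_nhds).pos_mul_atTop ht2 hinv
    have h2 : Tendsto (fun ν : ℝ => -(ν/2 * Real.cos (ν/2*c) * ε * (Real.sin ((ν-t₀)/2*c))⁻¹)) (nhdsWithin t₀ (Set.Ioi t₀)) atBot := by
      exact tendsto_neg_atBot_iff.mpr h1
    refine h2.congr (fun ν => ?_)
    rw [hid' ν]
    rcases hεpm with h | h <;> simp [h] <;> ring_nf <;> rw [div_eq_mul_inv] <;> ring

set_option maxHeartbeats 800000 in
theorem stmt_3 (L x₀ : ℝ) (hL : 0 < L) (hx₀ : 0 ≤ x₀) (hx₀' : x₀ < L/2)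
    (f : ℝ → ℝ)
    (hf : ∀ ν, f ν = -(ν/2) * Real.sin (ν*L/2) /
      (Real.sin (ν/2*(L/2 + x₀)) * Real.sin (ν/2*(L/2 - x₀))))
    (D : Set ℝ)
    (hD : D = {ν : ℝ | 0 < ν ∧
      Real.sin (ν/2*(L/2 + x₀)) * Real.sin (ν/2*(L/2 - x₀)) ≠ 0})
    (k : ℕ) (hk : 0 < k) :
    Tendsto f (nhdsWithin (2*k*π/(L/2 + x₀)) (Set.Iio (2*k*π/(L/2 + x₀)) ∩ D)) atTop ∧
    Tendsto f (nhdsWithin (2*k*π/(L/2 + x₀)) (Set.Ioi (2*k*π/(L/2 + x₀)) ∩ D)) atBot := by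
  set a := L/2 + x₀ with ha'
  set b := L/2 - x₀ with hb'
  have ha : 0 < a := by simp [ha']; linarith
  have hb : 0 < b := by simp [hb']; linarith
  have hab : a + b = L := by rw [ha', hb']; ring
  set t₀ := 2*(k:ℝ)*π/a with ht₀'
  have hkpos : (0:ℝ) < k := Nat.cast_pos.mpr hk
  have ht₀ : 0 < t₀ := by
    apply div_pos _ ha
    positivity
  have hsa : Real.sin (t₀/2*a) = 0 := by
    have : t₀/2*a = k*π := by
      rw [ht₀']; field_simp
    rw [this, Real.sin_nat_mul_pi]
  set A : ℝ → ℝ := fun ν => -(ν/2) * Real.cos (ν/2*a) / Real.sin (ν/2*a) with hA'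
  set B : ℝ → ℝ := fun ν => -(ν/2) * Real.cos (ν/2*b) / Real.sin (ν/2*b) with hB'
  have key : ∀ s : Set ℝ, (∀ᶠ ν in nhdsWithin t₀ (s ∩ D), f ν = B ν + A ν) := by
    intro s
    have hmem : ∀ᶠ ν in nhdsWithin t₀ (s ∩ D), ν ∈ D := by
      filter_upwards [self_mem_nhdsWithin] with ν hν using hν.2
    filter_upwards [hmem] with ν hν
    rw [hD] at hν
    obtain ⟨h1, h2⟩ := mul_ne_zero_iff.mp hν.2
    have algebra : ∀ p sx cx sy cy : ℝ, sx ≠ 0 → sy ≠ 0 →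
        p * (sx*cy + cx*sy) / (sx*sy) = p*cy/sy + p*cx/sx := by
      intro p sx cx sy cy hsx hsy
      field_simp
    rw [hf]
    show _ = -(ν/2) * Real.cos (ν/2*b) / Real.sin (ν/2*b) +
        -(ν/2) * Real.cos (ν/2*a) / Real.sin (ν/2*a)
    have hL2 : ν*L/2 = ν/2*a + ν/2*b := by rw [← hab]; ring
    rw [hL2, Real.sin_add]
    exact algebra _ _ _ _ _ h1 h2
  constructor
  · have hA : Tendsto A (nhdsWithin t₀ (Set.Iio t₀ ∩ D)) atTop :=
      (cot_blowup a t₀ ha ht₀ hsa).1.mono_left (nhdsWithin_mono _ inter_subset_left)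
    have hB : ∃ C : ℝ, ∀ᶠ ν in nhdsWithin t₀ (Set.Iio t₀ ∩ D), C ≤ B ν := by
      by_cases hsb : Real.sin (t₀/2*b) = 0
      · exact ⟨0, ((cot_blowup b t₀ hb ht₀ hsb).1.mono_left
          (nhdsWithin_mono _ inter_subset_left)).eventually_ge_atTop 0⟩
      · have hcB : ContinuousAt B t₀ := ContinuousAt.div (by fun_prop) (by fun_prop) hsb
        refine ⟨B t₀ - 1, ?_⟩
        exact (hcB.tendsto.mono_left nhdsWithin_le_nhds).eventually
          (eventually_ge_nhds (by linarith))
    obtain ⟨C, hC⟩ := hB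
    have keq : f =ᶠ[nhdsWithin t₀ (Set.Iio t₀ ∩ D)] (fun ν => B ν + A ν) := key _
    exact (tendsto_atTop_add_left_of_le' _ C hC hA).congr' keq.symm
  · have hA : Tendsto A (nhdsWithin t₀ (Set.Ioi t₀ ∩ D)) atBot :=
      (cot_blowup a t₀ ha ht₀ hsa).2.mono_left (nhdsWithin_mono _ inter_subset_left)
    have hB : ∃ C : ℝ, ∀ᶠ ν in nhdsWithin t₀ (Set.Ioi t₀ ∩ D), B ν ≤ C := by
      by_cases hsb : Real.sin (t₀/2*b) = 0
      · exact ⟨0, ((cot_blowup b t₀ hb ht₀ hsb).2.mono_left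
          (nhdsWithin_mono _ inter_subset_left)).eventually_le_atBot 0⟩
      · have hcB : ContinuousAt B t₀ := ContinuousAt.div (by fun_prop) (by fun_prop) hsb
        refine ⟨B t₀ + 1, ?_⟩
        exact (hcB.tendsto.mono_left nhdsWithin_le_nhds).eventually
          (eventually_le_nhds (by linarith))
    obtain ⟨C, hC⟩ := hB
    have keq : f =ᶠ[nhdsWithin t₀ (Set.Ioi t₀ ∩ D)] (fun ν => B ν + A ν) := key _
    exact (tendsto_atBot_add_left_of_ge' _ C hC hA).congr' keq.symm
end

section
/- Let L > 0, x₀ ∈ [0, L/2), q = (L/2 - x₀)/(L/2 + x₀), and let p ∈ ℕ with Φ(x) := √(2/L)·sin((pπ/L)(L/2 - x)) satisfying Φ(x₀) = 0. Define Υ(x) = -√q·Φ(x) for -L/2 ≤ x ≤ x₀ and Υ(x) = (1/√q)·Φ(x) for x₀ < x ≤ L/2. Then ∫_{-L/2}^{L/2} Υ(x)² dx = 1 and (∫_{x₀}^{L/2} Υ(x)² dx) / (∫_{-L/2}^{x₀} Υ(x)² dx) = 1/q. -/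
open Real MeasureTheory intervalIntegral

/-!
Between two zeros of `sin` the mean value of `sin²` is exactly `1/2`, so the mass of the
normalized eigenfunction `Φ` between two of its zeros `a < b` is `(b - a) / L`. Since `Φ`
vanishes at `x₀` and at `±L/2`, the pieces of `Φ²` on either side of `x₀` have masses
`(L/2 + x₀)/L` and `(L/2 - x₀)/L`; rescaling them by `q` and `1/q` swaps the two masses.
-/

theorem integral_sin_sq_of_sin_eq_zero {u v : ℝ} (hu : sin u = 0) (hv : sin v = 0) :
    ∫ x in u..v, sin x ^ 2 = (v - u) / 2 := by
  rw [integral_sin_sq, hu, hv]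
  ring

theorem integral_sin_mul_sub_sq_of_sin_eq_zero {c s a b : ℝ} (hc : c ≠ 0)
    (ha : sin (c * (s - a)) = 0) (hb : sin (c * (s - b)) = 0) :
    ∫ x in a..b, sin (c * (s - x)) ^ 2 = (b - a) / 2 := by
  simp_rw [mul_sub] at ha hb ⊢
  rw [integral_comp_sub_mul (fun x => sin x ^ 2) hc, integral_sin_sq_of_sin_eq_zero hb ha,
    smul_eq_mul]
  field_simp
  ring

theorem integral_sq_of_eq_sqrt_mul_sin {L c s a b : ℝ} {Φ : ℝ → ℝ} (hL : 0 < L) (hc : c ≠ 0)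
    (hΦ : ∀ x, Φ x = √(2 / L) * sin (c * (s - x))) (ha : Φ a = 0) (hb : Φ b = 0) :
    ∫ x in a..b, Φ x ^ 2 = (b - a) / L := by
  have hsqrt : √(2 / L) ≠ 0 := by positivity
  rw [hΦ] at ha hb
  simp_rw [hΦ, mul_pow, sq_sqrt (by positivity : (0 : ℝ) ≤ 2 / L)]
  rw [intervalIntegral.integral_const_mul, integral_sin_mul_sub_sq_of_sin_eq_zero hc
    ((mul_eq_zero.mp ha).resolve_left hsqrt) ((mul_eq_zero.mp hb).resolve_left hsqrt)]
  field_simp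

section Piecewise

variable {f g : ℝ → ℝ} {α β a b x₀ : ℝ}

theorem integral_sq_of_eq_ite_left (hg : ∀ x, g x = if x ≤ x₀ then α * f x else β * f x)
    (h : a ≤ x₀) : ∫ x in a..x₀, g x ^ 2 = α ^ 2 * ∫ x in a..x₀, f x ^ 2 := by
  rw [← intervalIntegral.integral_const_mul]
  refine integral_congr_ae (ae_of_all _ fun x hx => ?_)
  rw [Set.uIoc_of_le h] at hx
  rw [hg, if_pos hx.2, mul_pow]

theorem integral_sq_of_eq_ite_right (hg : ∀ x, g x = if x ≤ x₀ then α * f x else β * f x)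
    (h : x₀ ≤ b) : ∫ x in x₀..b, g x ^ 2 = β ^ 2 * ∫ x in x₀..b, f x ^ 2 := by
  rw [← intervalIntegral.integral_const_mul]
  refine integral_congr_ae (ae_of_all _ fun x hx => ?_)
  rw [Set.uIoc_of_le h] at hx
  rw [hg, if_neg (not_le.mpr hx.1), mul_pow]

end Piecewise

theorem stmt_8 (L x₀ : ℝ) (hL : 0 < L) (hx₀ : 0 ≤ x₀) (hx₀' : x₀ < L/2)
    (q : ℝ) (hq : q = (L/2 - x₀)/(L/2 + x₀))
    (p : ℕ) (hp : 0 < p)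
    (Φ : ℝ → ℝ) (hΦ : ∀ x, Φ x = Real.sqrt (2/L) * Real.sin ((p*π/L)*(L/2 - x)))
    (hΦ0 : Φ x₀ = 0)
    (Υ : ℝ → ℝ)
    (hΥ : ∀ x, Υ x = if x ≤ x₀ then -Real.sqrt q * Φ x else (1/Real.sqrt q) * Φ x) :
    (∫ x in (-(L/2))..(L/2), (Υ x)^2) = 1 ∧
    (∫ x in x₀..(L/2), (Υ x)^2) / (∫ x in (-(L/2))..x₀, (Υ x)^2) = 1/q := by
  have hq₀ : 0 ≤ q := by rw [hq]; apply div_nonneg <;> linarith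
  have hc : (p * π / L : ℝ) ≠ 0 := by positivity
  have hΦ_left : Φ (-(L / 2)) = 0 := by
    rw [hΦ, show p * π / L * (L / 2 - -(L / 2)) = p * π by field_simp; ring, sin_nat_mul_pi,
      mul_zero]
  have hΦ_right : Φ (L / 2) = 0 := by simp [hΦ]
  have hleft : ∫ x in -(L / 2)..x₀, Υ x ^ 2 = (L / 2 - x₀) / L := by
    rw [integral_sq_of_eq_ite_left hΥ (by linarith),
      integral_sq_of_eq_sqrt_mul_sin hL hc hΦ hΦ_left hΦ0, neg_sq, sq_sqrt hq₀, hq]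
    field_simp
    ring
  have hright : ∫ x in x₀..L / 2, Υ x ^ 2 = (L / 2 + x₀) / L := by
    have : L - 2 * x₀ ≠ 0 := by linarith
    rw [integral_sq_of_eq_ite_right hΥ hx₀'.le,
      integral_sq_of_eq_sqrt_mul_sin hL hc hΦ hΦ0 hΦ_right, div_pow, sq_sqrt hq₀, hq]
    field_simp
  have hpos : L / 2 - x₀ ≠ 0 := by linarith
  refine ⟨?_, ?_⟩
  · rw [← integral_add_adjacent_intervals
      (intervalIntegrable_of_integral_ne_zero (by rw [hleft]; positivity))
      (intervalIntegrable_of_integral_ne_zero (by rw [hright]; positivity)), hleft, hright]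
    field_simp
    ring
  · rw [hleft, hright, hq]
    field_simp
end

section
/- Let L > 0, x₀ ∈ [0, L/2), q = (L/2 - x₀)/(L/2 + x₀), p ∈ ℕ with Φ(x) = √(2/L)·sin((pπ/L)(L/2 - x)) satisfying Φ(x₀) = 0. Define Υ(x) = -√q·Φ(x) on [-L/2, x₀] and Υ(x) = (1/√q)·Φ(x) on (x₀, L/2]. Then ∫_{-L/2}^{L/2} x·Υ(x)² dx = x₀. -/
/-!
On each side of the node x₀ the weight Υ² is a constant multiple of Φ² (q on the left, 1/q on the
right). Since Φ vanishes at both ends of each piece, the oscillating terms of the primitive of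
x sin²(a(c - x)) drop out and the first moment of sin² over a piece [u, v] is (v² - u²)/4, exactly
as for the constant 1/2. The two pieces then contribute (L²/4 - x₀²)(1/q - q)/(2L), and
(L²/4 - x₀²)(1/q - q) = (L/2 + x₀)² - (L/2 - x₀)² = 2Lx₀.
-/

open Real MeasureTheory intervalIntegral

theorem hasDerivAt_mul_sin_sq_primitive {a : ℝ} (ha : a ≠ 0) (c x : ℝ) :
    HasDerivAt
      (fun y => y ^ 2 / 4 - cos (2 * (a * (c - y))) / (8 * a ^ 2)
        + y * sin (2 * (a * (c - y))) / (4 * a))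
      (x * sin (a * (c - x)) ^ 2) x := by
  have hθ : HasDerivAt (fun y : ℝ => 2 * (a * (c - y))) (2 * (a * (-1))) x := by
    simpa using (((hasDerivAt_id x).const_sub c).const_mul a).const_mul 2
  refine ((((hasDerivAt_pow 2 x).div_const 4).sub (hθ.cos.div_const (8 * a ^ 2))).add
    (((hasDerivAt_id x).mul hθ.sin).div_const (4 * a))).congr_deriv ?_
  rw [cos_two_mul, sin_two_mul]
  simp only [id]
  field_simp
  linear_combination (-32 * a * x) * sin_sq_add_cos_sq (a * (c - x))

theorem cos_two_mul_of_sin_eq_zero {θ : ℝ} (h : sin θ = 0) : cos (2 * θ) = 1 := by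
  rw [cos_two_mul, cos_sq', h]
  norm_num

theorem sin_two_mul_of_sin_eq_zero {θ : ℝ} (h : sin θ = 0) : sin (2 * θ) = 0 := by
  rw [sin_two_mul, h, mul_zero, zero_mul]

theorem integral_mul_sin_sq_of_sin_eq_zero {a c u v : ℝ} (ha : a ≠ 0)
    (hu : sin (a * (c - u)) = 0) (hv : sin (a * (c - v)) = 0) :
    ∫ x in u..v, x * sin (a * (c - x)) ^ 2 = (v ^ 2 - u ^ 2) / 4 := by
  rw [integral_eq_sub_of_hasDerivAt (fun x _ => hasDerivAt_mul_sin_sq_primitive ha c x)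
    ((by fun_prop : Continuous fun x => x * sin (a * (c - x)) ^ 2).intervalIntegrable u v)]
  simp only [cos_two_mul_of_sin_eq_zero hu, cos_two_mul_of_sin_eq_zero hv,
    sin_two_mul_of_sin_eq_zero hu, sin_two_mul_of_sin_eq_zero hv]
  ring

theorem integral_ite_le {E : Type*} [NormedAddCommGroup E] [NormedSpace ℝ E] {μ : Measure ℝ}
    {f g : ℝ → E} {a b x₀ : ℝ} (ha : a ≤ x₀) (hb : x₀ ≤ b)
    (hf : IntervalIntegrable f μ a x₀) (hg : IntervalIntegrable g μ x₀ b) :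
    ∫ x in a..b, (if x ≤ x₀ then f x else g x) ∂μ
      = (∫ x in a..x₀, f x ∂μ) + ∫ x in x₀..b, g x ∂μ := by
  have hleft : Set.EqOn (fun x => if x ≤ x₀ then f x else g x) f (Set.uIoc a x₀) := by
    intro x hx
    rw [Set.uIoc_of_le ha] at hx
    exact if_pos hx.2
  have hright : Set.EqOn (fun x => if x ≤ x₀ then f x else g x) g (Set.uIoc x₀ b) := by
    intro x hx
    rw [Set.uIoc_of_le hb] at hx
    exact if_neg (not_le.mpr hx.1)
  rw [← integral_add_adjacent_intervals (hf.congr hleft.symm) (hg.congr hright.symm),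
    integral_congr_ae (Filter.Eventually.of_forall hleft),
    integral_congr_ae (Filter.Eventually.of_forall hright)]

theorem stmt_9 (L x₀ : ℝ) (hL : 0 < L) (hx₀ : 0 ≤ x₀) (hx₀' : x₀ < L/2)
    (q : ℝ) (hq : q = (L/2 - x₀)/(L/2 + x₀))
    (p : ℕ) (hp : 0 < p)
    (Φ : ℝ → ℝ) (hΦ : ∀ x, Φ x = Real.sqrt (2/L) * Real.sin ((p*π/L)*(L/2 - x)))
    (hΦ0 : Φ x₀ = 0)
    (Υ : ℝ → ℝ)
    (hΥ : ∀ x, Υ x = if x ≤ x₀ then -Real.sqrt q * Φ x else (1/Real.sqrt q) * Φ x) :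
    (∫ x in (-(L/2))..(L/2), x * (Υ x)^2) = x₀ := by
  set a := (p : ℝ) * π / L
  have ha : a ≠ 0 := by positivity
  have hq0 : 0 < q := by rw [hq]; apply div_pos <;> linarith
  have hmoment : ∀ u v, sin (a * (L/2 - u)) = 0 → sin (a * (L/2 - v)) = 0 →
      ∫ x in u..v, x * Φ x ^ 2 = 2 / L * ((v ^ 2 - u ^ 2) / 4) := by
    intro u v hu hv
    simp only [hΦ, mul_pow, sq_sqrt (by positivity : (0 : ℝ) ≤ 2 / L), mul_left_comm _ (2 / L),
      intervalIntegral.integral_const_mul, integral_mul_sin_sq_of_sin_eq_zero ha hu hv]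
  have hnode : sin (a * (L/2 - x₀)) = 0 := by
    rw [hΦ] at hΦ0
    exact (mul_eq_zero.mp hΦ0).resolve_left (by positivity)
  have hleft_end : sin (a * (L/2 - -(L/2))) = 0 := by
    rw [show a * (L/2 - -(L/2)) = p * π by simp only [a]; field_simp; ring, sin_nat_mul_pi]
  have hright_end : sin (a * (L/2 - L/2)) = 0 := by simp
  have hweight : (fun x => x * Υ x ^ 2)
      = fun x => if x ≤ x₀ then q * (x * Φ x ^ 2) else q⁻¹ * (x * Φ x ^ 2) := by
    funext x
    rw [hΥ]
    split_ifs <;> simp only [mul_pow, neg_sq, div_pow, one_pow, sq_sqrt hq0.le] <;> ring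
  have hcont : Continuous fun x => x * Φ x ^ 2 := by
    rw [funext hΦ]; fun_prop
  rw [hweight, integral_ite_le (by linarith) hx₀'.le
    ((hcont.const_mul q).intervalIntegrable _ _) ((hcont.const_mul q⁻¹).intervalIntegrable _ _),
    intervalIntegral.integral_const_mul, intervalIntegral.integral_const_mul,
    hmoment _ _ hleft_end hnode, hmoment _ _ hnode hright_end, hq]
  have h1 : L + 2 * x₀ ≠ 0 := by linarith
  have h2 : L - 2 * x₀ ≠ 0 := by linarith
  field_simp
  ring
end

section
/- Let L > 0 and x₀ ∈ [0, L/2). For ν < 0, define Ψ(x) = sinh((ν/2)(L/2 - x₀))·sinh((ν/2)(L/2 + x)) for -L/2 ≤ x ≤ x₀ and Ψ(x) = sinh((ν/2)(L/2 + x₀))·sinh((ν/2)(L/2 - x)) for x₀ ≤ x ≤ L/2. Then lim_{ν→-∞} (∫_{x₀}^{L/2} Ψ(x)² dx) / (∫_{-L/2}^{x₀} Ψ(x)² dx) = 1. -/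
open Real MeasureTheory intervalIntegral Filter Topology

/-!
With `a = L/2 - x₀` and `b = L/2 + x₀`, the square of `Ψ` on each side of `x₀` is a constant
`sinh²` factor times `sinh²(ν y / 2)`, where `y` is the distance to the nearer wall. Hence the
ratio equals `sinh²(ν b / 2) I(a) / (sinh²(ν a / 2) I(b))` with
`I(c) = ∫₀^c sinh²(ν y / 2) dy = (sinh (ν c) - ν c) / (2 ν)`.
Since `(sinh t - t) / sinh²(t / 2) → -2` as `t → -∞`, both `ν I(a) / sinh²(ν a / 2)` and
`ν I(b) / sinh²(ν b / 2)` tend to `-1`, and the ratio tends to `1`.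
-/

theorem integral_sinh_mul_sq {c : ℝ} (hc : c ≠ 0) (p q : ℝ) :
    ∫ x in p..q, sinh (c * x) ^ 2
      = (sinh (2 * c * q) - sinh (2 * c * p)) / (4 * c) - (q - p) / 2 := by
  have hderiv (x : ℝ) :
      HasDerivAt (fun y ↦ sinh (2 * c * y) / (4 * c) - y / 2) (sinh (c * x) ^ 2) x := by
    have hlin : HasDerivAt (fun y ↦ 2 * c * y) (2 * c) x := by
      simpa using (hasDerivAt_id x).const_mul (2 * c)
    refine ((((hasDerivAt_sinh _).comp x hlin).div_const (4 * c)).sub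
      ((hasDerivAt_id x).div_const 2)).congr_deriv ?_
    rw [show 2 * c * x = 2 * (c * x) by ring, cosh_two_mul, cosh_sq]
    field_simp
    ring
  rw [integral_eq_sub_of_hasDerivAt (fun x _ ↦ hderiv x)
    ((by fun_prop : Continuous fun x ↦ sinh (c * x) ^ 2).intervalIntegrable p q)]
  ring

theorem tendsto_mul_exp_atBot : Tendsto (fun t : ℝ ↦ t * exp t) atBot (𝓝 0) := by
  have h := ((tendsto_pow_mul_exp_neg_atTop_nhds_zero 1).comp tendsto_neg_atBot_atTop).neg
  simpa [Function.comp_def] using h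

theorem tendsto_sinh_sub_self_div_sinh_half_sq_atBot :
    Tendsto (fun t : ℝ ↦ (sinh t - t) / sinh (t / 2) ^ 2) atBot (𝓝 (-2)) := by
  -- multiplying numerator and denominator by `exp t` leaves a rational function of
  -- `exp t` and `t * exp t`, both of which tend to `0`
  have hE := tendsto_exp_atBot
  have hlim : Tendsto (fun t : ℝ ↦ 2 * (exp t ^ 2 - 1 - 2 * (t * exp t)) / (exp t - 1) ^ 2)
      atBot (𝓝 (2 * (0 ^ 2 - 1 - 2 * 0) / (0 - 1) ^ 2)) :=
    (((((hE.pow 2).sub_const 1).sub (tendsto_mul_exp_atBot.const_mul 2)).const_mul 2).div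
      ((hE.sub_const 1).pow 2) (by norm_num))
  norm_num at hlim
  refine hlim.congr' ?_
  filter_upwards [eventually_lt_atBot 0] with t ht
  have hexp : exp t - 1 ≠ 0 := (sub_neg.mpr (exp_lt_one_iff.mpr ht)).ne
  have hsinh : sinh (t / 2) ^ 2 = (exp t - 1) ^ 2 / (4 * exp t) := by
    have := cosh_two_mul (t / 2)
    rw [show 2 * (t / 2) = t by ring, cosh_sq, cosh_eq, exp_neg] at this
    field_simp at this ⊢
    linarith
  rw [hsinh, sinh_eq, exp_neg]
  field_simp
  ring

theorem tendsto_mul_integral_sinh_sq_div_atBot {a : ℝ} (ha : 0 < a) :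
    Tendsto (fun ν : ℝ ↦ ν * (∫ y in 0..a, sinh (ν / 2 * y) ^ 2) / sinh (ν / 2 * a) ^ 2)
      atBot (𝓝 (-1)) := by
  have hlim := (tendsto_sinh_sub_self_div_sinh_half_sq_atBot.comp
    (tendsto_id.atBot_mul_const' ha)).div_const 2
  norm_num at hlim
  refine hlim.congr' ?_
  filter_upwards [eventually_lt_atBot 0] with ν hν
  rw [integral_sinh_mul_sq (div_ne_zero hν.ne two_ne_zero)]
  simp only [mul_zero, sinh_zero]
  field_simp [hν.ne]
  ring_nf

theorem stmt_11_general (L x₀ : ℝ) (hx₀ : 0 ≤ x₀) (hx₀' : x₀ < L/2)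
    (Ψ : ℝ → ℝ → ℝ)
    (hΨ : ∀ ν x, Ψ ν x = if x ≤ x₀ then
        Real.sinh (ν/2*(L/2 - x₀)) * Real.sinh (ν/2*(L/2 + x))
      else
        Real.sinh (ν/2*(L/2 + x₀)) * Real.sinh (ν/2*(L/2 - x))) :
    Tendsto (fun ν : ℝ =>
        (∫ x in x₀..(L/2), (Ψ ν x)^2) / (∫ x in (-(L/2))..x₀, (Ψ ν x)^2))
      atBot (nhds 1) := by
  have hright (ν : ℝ) : ∫ x in x₀..(L/2), (Ψ ν x)^2
      = sinh (ν / 2 * (L / 2 + x₀)) ^ 2 * ∫ y in 0..(L / 2 - x₀), sinh (ν / 2 * y) ^ 2 := by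
    have hshift := integral_comp_sub_left (fun y ↦ sinh (ν / 2 * y) ^ 2) (L / 2)
      (a := x₀) (b := L / 2)
    rw [sub_self] at hshift
    rw [← hshift, ← intervalIntegral.integral_const_mul]
    refine integral_congr_ae (ae_of_all _ fun x hx ↦ ?_)
    rw [Set.uIoc_of_le hx₀'.le] at hx
    rw [hΨ, if_neg (not_le.mpr hx.1), mul_pow]
  have hleft (ν : ℝ) : ∫ x in (-(L/2))..x₀, (Ψ ν x)^2
      = sinh (ν / 2 * (L / 2 - x₀)) ^ 2 * ∫ y in 0..(L / 2 + x₀), sinh (ν / 2 * y) ^ 2 := by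
    have hshift := integral_comp_add_left (fun y ↦ sinh (ν / 2 * y) ^ 2) (L / 2)
      (a := -(L / 2)) (b := x₀)
    rw [add_neg_cancel] at hshift
    rw [← hshift, ← intervalIntegral.integral_const_mul]
    refine integral_congr_ae (ae_of_all _ fun x hx ↦ ?_)
    rw [Set.uIoc_of_le (by linarith)] at hx
    rw [hΨ, if_pos hx.2, mul_pow]
  have hlim := (tendsto_mul_integral_sinh_sq_div_atBot (by linarith : 0 < L / 2 - x₀)).div
    (tendsto_mul_integral_sinh_sq_div_atBot (by linarith : 0 < L / 2 + x₀)) (by norm_num)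
  rw [div_self (by norm_num)] at hlim
  refine hlim.congr' ?_
  filter_upwards [eventually_lt_atBot 0] with ν hν
  have hsinh {c : ℝ} (hc : 0 < c) : sinh (ν / 2 * c) ≠ 0 :=
    sinh_ne_zero.mpr (mul_ne_zero (by linarith) hc.ne')
  rw [Pi.div_apply, hright, hleft]
  field_simp [hsinh (by linarith : 0 < L / 2 - x₀), hsinh (by linarith : 0 < L / 2 + x₀), hν.ne]

theorem stmt_11 (L x₀ : ℝ) (hL : 0 < L) (hx₀ : 0 ≤ x₀) (hx₀' : x₀ < L/2)
    (Ψ : ℝ → ℝ → ℝ)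
    (hΨ : ∀ ν x, Ψ ν x = if x ≤ x₀ then
        Real.sinh (ν/2*(L/2 - x₀)) * Real.sinh (ν/2*(L/2 + x))
      else
        Real.sinh (ν/2*(L/2 + x₀)) * Real.sinh (ν/2*(L/2 - x))) :
    Tendsto (fun ν : ℝ =>
        (∫ x in x₀..(L/2), (Ψ ν x)^2) / (∫ x in (-(L/2))..x₀, (Ψ ν x)^2))
      atBot (nhds 1) :=
  stmt_11_general L x₀ hx₀ hx₀' Ψ hΨ
end

section
/- Let L > 0, x₀ ∈ [0, L/2), and for ν < 0 define h(ν) = -(ν/2)·(coth((ν/2)(L/2 - x₀)) + coth((ν/2)(L/2 + x₀))). Then h is strictly increasing on (-∞, 0), lim_{ν→0⁻} h(ν) = -L/(L²/4 - x₀²), and lim_{ν→-∞} h(ν)/ν = 1. -/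
/-! Each summand of `h` is `-(ν/2) coth(νc/2) = -c⁻¹ g(νc/2)` with `c = L/2 ∓ x₀ > 0` and
`g t = t coth t`. Since `g' t = (sinh t cosh t - t) / sinh² t` and `sinh 2t < 2t` for `t < 0`, `g`
strictly decreases on `(-∞, 0)`, so every summand strictly increases. As `t → 0`, `g t → 1`, giving
the limit `-1/c₁ - 1/c₂ = -L / (L²/4 - x₀²)`; as `t → -∞`, `coth t → -1`, so each summand divided
by `ν` tends to `1/2`. -/

open Real Filter Set Topology

namespace Real

noncomputable def coth (x : ℝ) : ℝ := cosh x / sinh x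

-- Also true at `x = 0`, where both sides are `0` by the convention `a / 0 = 0`.
lemma coth_eq_exp (x : ℝ) : coth x = (exp (2 * x) + 1) / (exp (2 * x) - 1) := by
  have hexp : exp (2 * x) = exp x * exp x := by rw [← exp_add, two_mul]
  rw [coth, cosh_eq, sinh_eq, exp_neg, hexp]
  have := exp_pos x
  field_simp

lemma tendsto_coth_atBot : Tendsto coth atBot (𝓝 (-1)) := by
  have h : Tendsto (fun x => exp (2 * x)) atBot (𝓝 0) :=
    tendsto_exp_atBot.comp (tendsto_id.const_mul_atBot two_pos)
  have hlim := (h.add_const 1).div (h.sub_const 1) (by norm_num)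
  rw [zero_add, zero_sub, div_neg, div_one] at hlim
  exact hlim.congr fun x => (coth_eq_exp x).symm

lemma hasDerivAt_coth {x : ℝ} (hx : x ≠ 0) : HasDerivAt coth (-1 / sinh x ^ 2) x := by
  refine ((hasDerivAt_cosh x).div (hasDerivAt_sinh x) (sinh_ne_zero.2 hx)).congr_deriv ?_
  rw [← cosh_sq_sub_sinh_sq x]
  ring

lemma hasDerivAt_mul_coth {x : ℝ} (hx : x ≠ 0) :
    HasDerivAt (fun t => t * coth t) ((sinh x * cosh x - x) / sinh x ^ 2) x := by
  refine ((hasDerivAt_id x).mul (hasDerivAt_coth hx)).congr_deriv ?_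
  have := sinh_ne_zero.2 hx
  rw [id, coth]
  field_simp
  ring

lemma strictAntiOn_mul_coth : StrictAntiOn (fun t => t * coth t) (Iio 0) := by
  refine strictAntiOn_of_deriv_neg (convex_Iio 0)
    (fun x hx => (hasDerivAt_mul_coth (ne_of_lt hx)).continuousAt.continuousWithinAt)
    fun x hx => ?_
  rw [interior_Iio] at hx
  have hx : x < 0 := hx
  rw [(hasDerivAt_mul_coth hx.ne).deriv]
  have hsinh : sinh x * cosh x < x := by
    have := sinh_lt_self_iff.2 (by linarith : 2 * x < 0)
    rw [sinh_two_mul] at this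
    linarith
  have := sinh_ne_zero.2 hx.ne
  exact div_neg_of_neg_of_pos (by linarith) (by positivity)

lemma tendsto_mul_coth_nhdsNE_zero : Tendsto (fun t => t * coth t) (𝓝[≠] 0) (𝓝 1) := by
  have hslope : Tendsto (fun t => sinh t / t) (𝓝[≠] 0) (𝓝 1) := by
    simpa [div_eq_inv_mul] using (hasDerivAt_sinh 0).tendsto_slope_zero
  have hcosh : Tendsto cosh (𝓝[≠] 0) (𝓝 1) := by
    simpa using continuous_cosh.continuousAt.tendsto.mono_left (nhdsWithin_le_nhds (a := 0))
  have hlim := hcosh.div hslope one_ne_zero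
  rw [div_one] at hlim
  refine hlim.congr fun t => ?_
  rw [Pi.div_apply, coth, div_div_eq_mul_div]
  ring

end Real

section HalfCothTerm

variable {c : ℝ}

lemma neg_half_mul_coth_eq (hc : c ≠ 0) (ν : ℝ) :
    -(ν / 2) * coth (ν / 2 * c) = -c⁻¹ * (ν / 2 * c * coth (ν / 2 * c)) := by
  field_simp

lemma strictMonoOn_neg_half_mul_coth (hc : 0 < c) :
    StrictMonoOn (fun ν => -(ν / 2) * coth (ν / 2 * c)) (Iio 0) := by
  intro a ha b hb hab
  have hu : ∀ ν ∈ Iio (0 : ℝ), ν / 2 * c ∈ Iio 0 := fun ν hν =>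
    mul_neg_of_neg_of_pos (div_neg_of_neg_of_pos hν two_pos) hc
  simp only [neg_half_mul_coth_eq hc.ne']
  exact mul_lt_mul_of_neg_left (strictAntiOn_mul_coth (hu a ha) (hu b hb) (by gcongr))
    (neg_neg_of_pos (inv_pos.2 hc))

lemma tendsto_neg_half_mul_coth_nhdsLT (hc : 0 < c) :
    Tendsto (fun ν => -(ν / 2) * coth (ν / 2 * c)) (𝓝[<] 0) (𝓝 (-c⁻¹)) := by
  have hu : Tendsto (fun ν : ℝ => ν / 2 * c) (𝓝[<] 0) (𝓝[≠] 0) := by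
    have := (Continuous.continuousWithinAt (s := Iio 0) (x := 0)
      (by fun_prop : Continuous fun ν : ℝ => ν / 2 * c)).tendsto_nhdsWithin
      (t := {0}ᶜ) fun ν hν => (mul_neg_of_neg_of_pos (div_neg_of_neg_of_pos hν two_pos) hc).ne
    simpa using this
  simpa [neg_half_mul_coth_eq hc.ne'] using
    (tendsto_mul_coth_nhdsNE_zero.comp hu).const_mul (-c⁻¹)

lemma tendsto_neg_half_mul_coth_div_atBot (hc : 0 < c) :
    Tendsto (fun ν => -(ν / 2) * coth (ν / 2 * c) / ν) atBot (𝓝 (1 / 2)) := by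
  have hu : Tendsto (fun ν : ℝ => ν / 2 * c) atBot atBot :=
    (tendsto_id.atBot_div_const two_pos).atBot_mul_const hc
  have hlim := (tendsto_coth_atBot.comp hu).const_mul (-1 / 2)
  rw [show (-1 / 2 : ℝ) * -1 = 1 / 2 by norm_num] at hlim
  refine hlim.congr' ?_
  filter_upwards [eventually_ne_atBot 0] with ν hν
  rw [Function.comp_apply, eq_div_iff hν]
  ring

end HalfCothTerm

theorem stmt_13 (L x₀ : ℝ) (hL : 0 < L) (hx₀ : 0 ≤ x₀) (hx₀' : x₀ < L/2)
    (h : ℝ → ℝ)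
    (hh : ∀ ν, h ν = -(ν/2) *
      (Real.cosh (ν/2*(L/2 - x₀)) / Real.sinh (ν/2*(L/2 - x₀))
        + Real.cosh (ν/2*(L/2 + x₀)) / Real.sinh (ν/2*(L/2 + x₀)))) :
    StrictMonoOn h (Set.Iio 0) ∧
    Tendsto h (nhdsWithin 0 (Set.Iio 0)) (nhds (-L/(L^2/4 - x₀^2))) ∧
    Tendsto (fun ν => h ν / ν) atBot (nhds 1) := by
  have hc₁ : 0 < L / 2 - x₀ := by linarith
  have hc₂ : 0 < L / 2 + x₀ := by linarith
  obtain rfl : h = fun ν => -(ν / 2) * coth (ν / 2 * (L / 2 - x₀))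
      + -(ν / 2) * coth (ν / 2 * (L / 2 + x₀)) := funext fun ν => by rw [hh, coth, coth]; ring
  refine ⟨(strictMonoOn_neg_half_mul_coth hc₁).add (strictMonoOn_neg_half_mul_coth hc₂),
    ?_, ?_⟩
  · have hsum : -(L / 2 - x₀)⁻¹ + -(L / 2 + x₀)⁻¹ = -L / (L ^ 2 / 4 - x₀ ^ 2) := by
      rw [show L ^ 2 / 4 - x₀ ^ 2 = (L / 2 - x₀) * (L / 2 + x₀) by ring, neg_div, ← neg_add,
        inv_add_inv hc₁.ne' hc₂.ne']
      ring
    exact hsum ▸ (tendsto_neg_half_mul_coth_nhdsLT hc₁).add (tendsto_neg_half_mul_coth_nhdsLT hc₂)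
  · have hlim := (tendsto_neg_half_mul_coth_div_atBot hc₁).add
      (tendsto_neg_half_mul_coth_div_atBot hc₂)
    rw [add_halves] at hlim
    exact hlim.congr fun ν => (add_div _ _ ν).symm
end

section
/- Let L > 0, x₀ ∈ [0, L/2), and n ∈ ℕ with sin((nπ/L)(L/2 - x₀)) ≠ 0 and sin((nπ/L)(L/2 + x₀)) ≠ 0. Then, with r(ν_n) denoting the ratio of ∫_{x₀}^{L/2} Ψ² over ∫_{-L/2}^{x₀} Ψ² for the piecewise-sine solution with ν = ν_n = 2nπ/L, one has r(ν_n) = q·(1 - sin(nπ(1 - 2x₀/L))/(nπ(1 - 2x₀/L))) / (1 - sin(nπ(1 + 2x₀/L))/(nπ(1 + 2x₀/L))), where q = (L/2 - x₀)/(L/2 + x₀); moreover r(ν_n) → q as n → ∞. -/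
/-!
On each side of `x₀` the mode is a constant times `sin (ν / 2 * y)`, with `y` the distance to
the nearer wall, so both integrals of `Ψ²` reduce to
`∫₀^ℓ sin² (a y) dy = ℓ/2 (1 - sin (2aℓ) / (2aℓ))`.
For `ν = 2nπ/L` the two amplitudes `sin (ν/2 (L/2 ∓ x₀))` have arguments summing to `nπ`, so their
squares agree and cancel in the ratio, leaving `q` times a quotient of `1 - sinc` factors; these
tend to `1` because `sin t / t → 0`.
-/

open Real MeasureTheory intervalIntegral Filter

theorem integral_sin_sq_mul (a ℓ : ℝ) (ha : a ≠ 0) :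
    ∫ x in 0..ℓ, sin (a * x) ^ 2 = ℓ / 2 * (1 - sin (2 * a * ℓ) / (2 * a * ℓ)) := by
  rw [integral_comp_mul_left (fun x => sin x ^ 2) ha, integral_sin_sq, mul_zero, sin_zero,
    mul_assoc, sin_two_mul, smul_eq_mul]
  rcases eq_or_ne ℓ 0 with rfl | hℓ
  · simp
  · field_simp
    ring

theorem sin_sq_eq_of_add_eq_nat_mul_pi {α β : ℝ} (n : ℕ) (h : α + β = n * π) :
    sin α ^ 2 = sin β ^ 2 := by
  rw [eq_sub_of_add_eq h, sin_nat_mul_pi_sub, neg_sq, mul_pow, ← pow_mul,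
    (even_two.mul_left n).neg_one_pow, one_mul]

-- At `c = 0` every term is the junk value `0 / 0 = 0`.
theorem tendsto_sin_natCast_mul_div (c : ℝ) :
    Tendsto (fun n : ℕ => sin (n * c) / (n * c)) atTop (nhds 0) := by
  have hbound : ∀ n : ℕ, ‖sin (n * c) / (n * c)‖ ≤ |c|⁻¹ * (n : ℝ)⁻¹ := fun n => by
    rw [norm_div, Real.norm_eq_abs, Real.norm_eq_abs, abs_mul, Nat.abs_cast, div_eq_mul_inv,
      mul_inv, mul_comm (n : ℝ)⁻¹]
    exact mul_le_of_le_one_left (by positivity) (abs_sin_le_one _)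
  have hdecay := (tendsto_inv_atTop_nhds_zero_nat (𝕜 := ℝ)).const_mul |c|⁻¹
  rw [mul_zero] at hdecay
  exact squeeze_zero_norm hbound hdecay

noncomputable def sineMode (L x₀ ν x : ℝ) : ℝ :=
  if x ≤ x₀ then sin (ν / 2 * (L / 2 - x₀)) * sin (ν / 2 * (L / 2 + x))
  else sin (ν / 2 * (L / 2 + x₀)) * sin (ν / 2 * (L / 2 - x))

section sineMode

variable {L x₀ ν : ℝ}

theorem integral_sineMode_sq_right (hx₀ : x₀ ≤ L / 2) (hν : ν ≠ 0) :
    ∫ x in x₀..L / 2, sineMode L x₀ ν x ^ 2 = sin (ν / 2 * (L / 2 + x₀)) ^ 2 *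
      ((L / 2 - x₀) / 2 * (1 - sin (ν * (L / 2 - x₀)) / (ν * (L / 2 - x₀)))) := by
  have hcongr : ∫ x in x₀..L / 2, sineMode L x₀ ν x ^ 2 =
      ∫ x in x₀..L / 2, sin (ν / 2 * (L / 2 + x₀)) ^ 2 * sin (ν / 2 * (L / 2 - x)) ^ 2 := by
    refine integral_congr_ae (Eventually.of_forall fun x hx => ?_)
    rw [Set.uIoc_of_le hx₀] at hx
    rw [sineMode, if_neg (not_le.mpr hx.1), mul_pow]
  rw [hcongr, intervalIntegral.integral_const_mul,
    integral_comp_sub_left (fun x => sin (ν / 2 * x) ^ 2), sub_self,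
    integral_sin_sq_mul _ _ (div_ne_zero hν two_ne_zero), mul_div_cancel₀ _ two_ne_zero]

theorem integral_sineMode_sq_left (hx₀ : -(L / 2) ≤ x₀) (hν : ν ≠ 0) :
    ∫ x in -(L / 2)..x₀, sineMode L x₀ ν x ^ 2 = sin (ν / 2 * (L / 2 - x₀)) ^ 2 *
      ((L / 2 + x₀) / 2 * (1 - sin (ν * (L / 2 + x₀)) / (ν * (L / 2 + x₀)))) := by
  have hcongr : ∫ x in -(L / 2)..x₀, sineMode L x₀ ν x ^ 2 =
      ∫ x in -(L / 2)..x₀, sin (ν / 2 * (L / 2 - x₀)) ^ 2 * sin (ν / 2 * (L / 2 + x)) ^ 2 := by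
    refine integral_congr fun x hx => ?_
    rw [Set.uIcc_of_le hx₀] at hx
    rw [sineMode, if_pos hx.2, mul_pow]
  rw [hcongr, intervalIntegral.integral_const_mul,
    integral_comp_add_left (fun x => sin (ν / 2 * x) ^ 2),
    add_neg_cancel, integral_sin_sq_mul _ _ (div_ne_zero hν two_ne_zero),
    mul_div_cancel₀ _ two_ne_zero]

theorem integral_sineMode_sq_ratio (n : ℕ) (hν : ν * L = 2 * n * π)
    (hx₀ : -(L / 2) ≤ x₀) (hx₀' : x₀ ≤ L / 2) (hs : sin (ν / 2 * (L / 2 - x₀)) ≠ 0) :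
    (∫ x in x₀..L / 2, sineMode L x₀ ν x ^ 2) / (∫ x in -(L / 2)..x₀, sineMode L x₀ ν x ^ 2) =
      (L / 2 - x₀) / (L / 2 + x₀) * (1 - sin (ν * (L / 2 - x₀)) / (ν * (L / 2 - x₀))) /
        (1 - sin (ν * (L / 2 + x₀)) / (ν * (L / 2 + x₀))) := by
  have hν₀ : ν ≠ 0 := by
    rintro rfl
    simp at hs
  have hsq : sin (ν / 2 * (L / 2 + x₀)) ^ 2 = sin (ν / 2 * (L / 2 - x₀)) ^ 2 :=
    sin_sq_eq_of_add_eq_nat_mul_pi n (by linear_combination hν / 2)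
  rw [integral_sineMode_sq_right hx₀' hν₀, integral_sineMode_sq_left hx₀ hν₀, hsq,
    mul_div_mul_left _ _ (pow_ne_zero 2 hs), mul_div_mul_comm,
    div_div_div_cancel_right₀ two_ne_zero, mul_div_assoc]

end sineMode

theorem stmt_15_general (L x₀ : ℝ) (hx₀ : 0 ≤ x₀) (hx₀' : x₀ < L/2)
    (q : ℝ) (hq : q = (L/2 - x₀)/(L/2 + x₀))
    (Ψ : ℝ → ℝ → ℝ)
    (hΨ : ∀ ν x, Ψ ν x = if x ≤ x₀ then
        Real.sin (ν/2*(L/2 - x₀)) * Real.sin (ν/2*(L/2 + x))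
      else
        Real.sin (ν/2*(L/2 + x₀)) * Real.sin (ν/2*(L/2 - x)))
    (r : ℝ → ℝ)
    (hr : ∀ ν, r ν = (∫ x in x₀..(L/2), (Ψ ν x)^2) / (∫ x in (-(L/2))..x₀, (Ψ ν x)^2)) :
    (∀ n : ℕ, 1 ≤ n →
      Real.sin ((n*π/L)*(L/2 - x₀)) ≠ 0 → Real.sin ((n*π/L)*(L/2 + x₀)) ≠ 0 →
      r (2*n*π/L) =
        q * (1 - Real.sin (n*π*(1 - 2*x₀/L))/(n*π*(1 - 2*x₀/L)))
          / (1 - Real.sin (n*π*(1 + 2*x₀/L))/(n*π*(1 + 2*x₀/L)))) ∧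
    Tendsto (fun n : ℕ =>
        q * (1 - Real.sin (n*π*(1 - 2*x₀/L))/(n*π*(1 - 2*x₀/L)))
          / (1 - Real.sin (n*π*(1 + 2*x₀/L))/(n*π*(1 + 2*x₀/L))))
      atTop (nhds q) := by
  have hΨ' : Ψ = sineMode L x₀ := by
    funext ν x
    exact hΨ ν x
  have hL : L ≠ 0 := by linarith
  refine ⟨fun n _ hs _ => ?_, ?_⟩
  · have hhalf : 2 * n * π / L / 2 = n * π / L := by ring
    have hminus : 2 * n * π / L * (L / 2 - x₀) = n * π * (1 - 2 * x₀ / L) := by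
      field_simp
    have hplus : 2 * n * π / L * (L / 2 + x₀) = n * π * (1 + 2 * x₀ / L) := by
      field_simp
    rw [hr, hΨ', integral_sineMode_sq_ratio n (by field_simp) (by linarith) hx₀'.le
      (by rwa [hhalf]), hminus, hplus, hq]
  · have h₁ := tendsto_sin_natCast_mul_div (π * (1 - 2 * x₀ / L))
    have h₂ := tendsto_sin_natCast_mul_div (π * (1 + 2 * x₀ / L))
    simp only [← mul_assoc] at h₁ h₂
    simpa [Pi.div_def] using ((h₁.const_sub 1).const_mul q).div (h₂.const_sub 1) (by norm_num)

theorem stmt_15 (L x₀ : ℝ) (hL : 0 < L) (hx₀ : 0 ≤ x₀) (hx₀' : x₀ < L/2)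
    (q : ℝ) (hq : q = (L/2 - x₀)/(L/2 + x₀))
    (Ψ : ℝ → ℝ → ℝ)
    (hΨ : ∀ ν x, Ψ ν x = if x ≤ x₀ then
        Real.sin (ν/2*(L/2 - x₀)) * Real.sin (ν/2*(L/2 + x))
      else
        Real.sin (ν/2*(L/2 + x₀)) * Real.sin (ν/2*(L/2 - x)))
    (r : ℝ → ℝ)
    (hr : ∀ ν, r ν = (∫ x in x₀..(L/2), (Ψ ν x)^2) / (∫ x in (-(L/2))..x₀, (Ψ ν x)^2)) :
    (∀ n : ℕ, 1 ≤ n →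
      Real.sin ((n*π/L)*(L/2 - x₀)) ≠ 0 → Real.sin ((n*π/L)*(L/2 + x₀)) ≠ 0 →
      r (2*n*π/L) =
        q * (1 - Real.sin (n*π*(1 - 2*x₀/L))/(n*π*(1 - 2*x₀/L)))
          / (1 - Real.sin (n*π*(1 + 2*x₀/L))/(n*π*(1 + 2*x₀/L)))) ∧
    Tendsto (fun n : ℕ =>
        q * (1 - Real.sin (n*π*(1 - 2*x₀/L))/(n*π*(1 - 2*x₀/L)))
          / (1 - Real.sin (n*π*(1 + 2*x₀/L))/(n*π*(1 + 2*x₀/L))))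
      atTop (nhds q) :=
  stmt_15_general L x₀ hx₀ hx₀' q hq Ψ hΨ r hr
end

section
/- For every γ ≥ π, the bounds 1 + 1/(2γ) + 1/(3γ²) ≤ (1 - 1/√(1+γ²))^{-1/2} ≤ 1 + 1/(2γ) + 1/(2γ²) hold. -/
set_option maxHeartbeats 800000


open Real

private lemma aux_le_of_sq_le_sq (a b : ℝ) (ha : 0 ≤ a) (hb : 0 ≤ b)
    (h : a^2 ≤ b^2) : a ≤ b := by nlinarith

theorem stmt_16 (γ : ℝ) (hγ : π ≤ γ) :
    1 + 1/(2*γ) + 1/(3*γ^2) ≤ 1 / Real.sqrt (1 - 1/Real.sqrt (1 + γ^2)) ∧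
    1 / Real.sqrt (1 - 1/Real.sqrt (1 + γ^2)) ≤ 1 + 1/(2*γ) + 1/(2*γ^2) := by
  have h3 : (3:ℝ) ≤ γ := le_trans (by linarith [Real.pi_gt_three]) hγ
  have hγ0 : (0:ℝ) < γ := by linarith
  have h30 : (0:ℝ) ≤ γ - 3 := by linarith
  have hs0 : 0 < Real.sqrt (1 + γ^2) := Real.sqrt_pos.2 (by positivity)
  have hs2 : (Real.sqrt (1 + γ^2))^2 = 1 + γ^2 := Real.sq_sqrt (by positivity)
  have hs1 : 1 < Real.sqrt (1 + γ^2) := by nlinarith [hs0, hs2]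
  have hA : 0 < 1 - 1/Real.sqrt (1 + γ^2) := by
    have : 1/Real.sqrt (1 + γ^2) < 1 := by rw [div_lt_one hs0]; exact hs1
    linarith
  have hAeq : 1 - 1/Real.sqrt (1 + γ^2)
      = (Real.sqrt (1 + γ^2) - 1)/Real.sqrt (1 + γ^2) := by field_simp
  have hsA : 0 < Real.sqrt (1 - 1/Real.sqrt (1 + γ^2)) := Real.sqrt_pos.2 hA
  have hsA2 : (Real.sqrt (1 - 1/Real.sqrt (1 + γ^2)))^2
      = 1 - 1/Real.sqrt (1 + γ^2) := Real.sq_sqrt hA.le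
  constructor
  · -- lower bound
    have hd : 0 ≤ (6*γ^2+3*γ+2)^2 - 36*γ^4 := by nlinarith [hγ0]
    have hpoly : (1 + γ^2) * ((6*γ^2+3*γ+2)^2 - 36*γ^4)^2 ≤ (6*γ^2+3*γ+2)^4 := by
      nlinarith [pow_nonneg h30 7, pow_nonneg h30 6, pow_nonneg h30 5,
        pow_nonneg h30 4, pow_nonneg h30 3, pow_nonneg h30 2, h30]
    have key1 : Real.sqrt (1 + γ^2) * ((6*γ^2+3*γ+2)^2 - 36*γ^4)
        ≤ (6*γ^2+3*γ+2)^2 := by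
      apply aux_le_of_sq_le_sq _ _ (mul_nonneg hs0.le hd) (by positivity)
      rw [mul_pow, hs2]; nlinarith [hpoly]
    have hL : 1 + 1/(2*γ) + 1/(3*γ^2) = (6*γ^2+3*γ+2)/(6*γ^2) := by
      field_simp; ring
    have hL2A : ((6*γ^2+3*γ+2)/(6*γ^2))^2 * (1 - 1/Real.sqrt (1 + γ^2)) ≤ 1 := by
      rw [hAeq, div_pow, div_mul_div_comm, div_le_one (by positivity)]
      linarith [key1]
    have hx2 : ((6*γ^2+3*γ+2)/(6*γ^2) * Real.sqrt (1 - 1/Real.sqrt (1 + γ^2)))^2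
        ≤ 1 := by
      rw [mul_pow, hsA2]; exact hL2A
    have hx : (6*γ^2+3*γ+2)/(6*γ^2) * Real.sqrt (1 - 1/Real.sqrt (1 + γ^2)) ≤ 1 := by
      have h0 : 0 ≤ (6*γ^2+3*γ+2)/(6*γ^2) * Real.sqrt (1 - 1/Real.sqrt (1 + γ^2)) := by
        positivity
      nlinarith [h0, hx2]
    rw [hL, le_div_iff₀ hsA]
    exact hx
  · -- upper bound
    have hd : 0 ≤ (2*γ^2+γ+1)^2 - 4*γ^4 := by nlinarith [hγ0]
    have hpoly : (2*γ^2+γ+1)^4 ≤ (1 + γ^2) * ((2*γ^2+γ+1)^2 - 4*γ^4)^2 := by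
      nlinarith [pow_pos hγ0 7, pow_pos hγ0 6, pow_pos hγ0 5,
        pow_pos hγ0 4, pow_pos hγ0 3, pow_pos hγ0 2]
    have key2 : (2*γ^2+γ+1)^2
        ≤ Real.sqrt (1 + γ^2) * ((2*γ^2+γ+1)^2 - 4*γ^4) := by
      apply aux_le_of_sq_le_sq _ _ (by positivity) (mul_nonneg hs0.le hd)
      rw [mul_pow, hs2]; nlinarith [hpoly]
    have hU : 1 + 1/(2*γ) + 1/(2*γ^2) = (2*γ^2+γ+1)/(2*γ^2) := by
      field_simp
    have hU2A : 1 ≤ ((2*γ^2+γ+1)/(2*γ^2))^2 * (1 - 1/Real.sqrt (1 + γ^2)) := by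
      rw [hAeq, div_pow, div_mul_div_comm, le_div_iff₀ (by positivity)]
      linarith [key2]
    have hx2 : 1 ≤ ((2*γ^2+γ+1)/(2*γ^2) * Real.sqrt (1 - 1/Real.sqrt (1 + γ^2)))^2 := by
      rw [mul_pow, hsA2]; exact hU2A
    have hx : 1 ≤ (2*γ^2+γ+1)/(2*γ^2) * Real.sqrt (1 - 1/Real.sqrt (1 + γ^2)) := by
      have h0 : 0 ≤ (2*γ^2+γ+1)/(2*γ^2) * Real.sqrt (1 - 1/Real.sqrt (1 + γ^2)) := by
        positivity
      nlinarith [h0, hx2]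
    rw [hU, div_le_iff₀ hsA]
    exact hx
end

section
/- For every natural n ≥ 2, the unique solution γ of γ = tan(γ) in the interval ((n - 1/2)π - π/2, (n - 1/2)π) satisfies (n - 1/2)π - 1/(3(n - 1/2)) < γ < (n - 1/2)π - 1/(4(n - 1/2)). -/
/-!
Write a root on the branch as `γ = (n - 1/2)π - x` with `0 < x < π/2`; then `tan γ = cot x` and
the equation becomes `cot x + x = (n - 1/2)π`. Since `tan γ - γ` is strictly increasing on the
branch, the root is unique and it suffices to compare `cot x + x` with `(n - 1/2)π` at
`x = 1/(4(n - 1/2))` and `x = 1/(3(n - 1/2))`. This follows from the bounds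
`1/x - x < cot x < 1/x - x/3` and `3 < π ≤ 4`.
-/

open Real Set

theorem StrictMonoOn.existsUnique_eq_and_mem_Ioo {α δ : Type*}
    [ConditionallyCompleteLinearOrder α] [TopologicalSpace α] [OrderTopology α] [DenselyOrdered α]
    [LinearOrder δ] [TopologicalSpace δ] [OrderClosedTopology δ]
    {f : α → δ} {s : Set α} [s.OrdConnected] (hf : StrictMonoOn f s) (hcont : ContinuousOn f s)
    {p q : α} (hp : p ∈ s) (hq : q ∈ s) {y : δ} (hfp : f p < y) (hfq : y < f q) :
    (∃! x, x ∈ s ∧ f x = y) ∧ ∀ x ∈ s, f x = y → p < x ∧ x < q := by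
  have hpq : p < q := (hf.lt_iff_lt hp hq).1 (hfp.trans hfq)
  have hIcc : Icc p q ⊆ s := Set.Icc_subset s hp hq
  obtain ⟨x, hx, hfx⟩ := intermediate_value_Ioo hpq.le (hcont.mono hIcc) ⟨hfp, hfq⟩
  refine ⟨⟨x, ⟨hIcc (Ioo_subset_Icc_self hx), hfx⟩, fun z hz => ?_⟩, fun z hz hfz => ?_⟩
  · exact hf.injOn hz.1 (hIcc (Ioo_subset_Icc_self hx)) (hz.2.trans hfx.symm)
  · exact ⟨(hf.lt_iff_lt hp hz).1 (hfz ▸ hfp), (hf.lt_iff_lt hz hq).1 (hfz ▸ hfq)⟩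

namespace Real

theorem tan_int_mul_pi_add_pi_div_two_sub (k : ℤ) (x : ℝ) :
    tan (k * π + π / 2 - x) = cot x := by
  rw [show k * π + π / 2 - x = π / 2 - x + k * π by ring, tan_add_int_mul_pi, tan_pi_div_two_sub,
    tan_eq_sin_div_cos, inv_div, cot_eq_cos_div_sin]

section Branch

variable {k : ℤ} {γ : ℝ}

theorem cos_ne_zero_of_mem_Ioo_int_mul_pi (hγ : γ ∈ Ioo (k * π) (k * π + π / 2)) :
    cos γ ≠ 0 := by
  rw [← sub_add_cancel γ (k * π), cos_add_int_mul_pi]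
  exact mul_ne_zero (zpow_ne_zero _ (by norm_num))
    (cos_pos_of_mem_Ioo ⟨by linarith [pi_pos, hγ.1], by linarith [hγ.2]⟩).ne'

theorem tan_pos_of_mem_Ioo_int_mul_pi (hγ : γ ∈ Ioo (k * π) (k * π + π / 2)) : 0 < tan γ := by
  rw [← sub_add_cancel γ (k * π), tan_add_int_mul_pi]
  exact tan_pos_of_pos_of_lt_pi_div_two (by linarith [hγ.1]) (by linarith [hγ.2])

theorem continuousOn_tan_sub_self (k : ℤ) :
    ContinuousOn (fun γ => tan γ - γ) (Ioo (k * π) (k * π + π / 2)) :=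
  (continuousOn_tan.mono fun _ hγ => cos_ne_zero_of_mem_Ioo_int_mul_pi hγ).sub continuousOn_id

theorem strictMonoOn_tan_sub_self (k : ℤ) :
    StrictMonoOn (fun γ => tan γ - γ) (Ioo (k * π) (k * π + π / 2)) := by
  refine strictMonoOn_of_deriv_pos (convex_Ioo _ _) (continuousOn_tan_sub_self k) fun γ hγ => ?_
  rw [interior_Ioo] at hγ
  have hcos := cos_ne_zero_of_mem_Ioo_int_mul_pi hγ
  rw [deriv_tan_sub_id γ hcos, one_div, ← inv_one_add_tan_sq hcos, inv_inv, add_sub_cancel_left]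
  exact pow_pos (tan_pos_of_mem_Ioo_int_mul_pi hγ) 2

end Branch

section CotBounds

variable {x : ℝ}

theorem mul_cos_lt_sin (h0 : 0 < x) (hπ : x < π) : x * cos x < sin x := by
  rcases lt_or_ge x (π / 2) with hx | hx
  · have hcos : 0 < cos x := cos_pos_of_mem_Ioo ⟨by linarith [pi_pos], hx⟩
    simpa only [tan_eq_sin_div_cos, lt_div_iff₀ hcos] using lt_tan h0 hx
  · exact (mul_nonpos_of_nonneg_of_nonpos h0.le (cos_nonpos_of_pi_div_two_le_of_le hx
      (by linarith [pi_pos]))).trans_lt (sin_pos_of_pos_of_lt_pi h0 hπ)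

theorem mul_cos_lt_one_sub_sq_div_three_mul_sin (h0 : 0 < x) (hπ : x < π) :
    x * cos x < (1 - x ^ 2 / 3) * sin x := by
  set φ : ℝ → ℝ := fun y => (1 - y ^ 2 / 3) * sin y - y * cos y
  have hφ (y : ℝ) : HasDerivAt φ (y / 3 * (sin y - y * cos y)) y := by
    refine ((((hasDerivAt_pow 2 y).div_const 3).const_sub 1).mul (hasDerivAt_sin y)).sub
      ((hasDerivAt_id y).mul (hasDerivAt_cos y)) |>.congr_deriv ?_
    simp only [id_eq, Nat.cast_ofNat, Nat.add_one_sub_one, pow_one, one_mul]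
    ring
  have hmono : StrictMonoOn φ (Icc 0 π) := by
    refine strictMonoOn_of_deriv_pos (convex_Icc 0 π)
      (fun y _ => (hφ y).continuousAt.continuousWithinAt) fun y hy => ?_
    rw [interior_Icc] at hy
    rw [(hφ y).deriv]
    exact mul_pos (by linarith [hy.1]) (sub_pos.2 (mul_cos_lt_sin hy.1 hy.2))
  have h := hmono (left_mem_Icc.2 pi_pos.le) ⟨h0.le, hπ.le⟩ h0
  simp only [φ, sin_zero, cos_zero, mul_zero, mul_one, sub_zero] at h
  linarith

theorem cot_lt_inv_sub_div_three (h0 : 0 < x) (hπ : x < π) : cot x < x⁻¹ - x / 3 := by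
  rw [cot_eq_cos_div_sin, div_lt_iff₀ (sin_pos_of_pos_of_lt_pi h0 hπ)]
  calc cos x = x⁻¹ * (x * cos x) := by field_simp
    _ < x⁻¹ * ((1 - x ^ 2 / 3) * sin x) :=
      mul_lt_mul_of_pos_left (mul_cos_lt_one_sub_sq_div_three_mul_sin h0 hπ) (inv_pos.2 h0)
    _ = (x⁻¹ - x / 3) * sin x := by field_simp

theorem inv_sub_self_lt_cot (h0 : 0 < x) (hx : x < π / 2) : x⁻¹ - x < cot x := by
  have hsin : 0 < sin x := sin_pos_of_pos_of_lt_pi h0 (by linarith [pi_pos])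
  have hcos : 0 < cos x := cos_pos_of_mem_Ioo ⟨by linarith [pi_pos], hx⟩
  rw [cot_eq_cos_div_sin, lt_div_iff₀ hsin]
  rcases lt_or_ge x 1 with hx1 | hx1
  · have hpos : 0 < x⁻¹ - x := by linarith [(one_lt_inv₀ h0).2 hx1]
    calc (x⁻¹ - x) * sin x < (x⁻¹ - x) * x := mul_lt_mul_of_pos_left (sin_lt h0) hpos
      _ = 1 - x ^ 2 := by field_simp
      _ < 1 - x ^ 2 / 2 := by linarith [pow_pos h0 2]
      _ ≤ cos x := one_sub_sq_div_two_le_cos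
  · have : x⁻¹ - x ≤ 0 := by linarith [inv_le_one_of_one_le₀ hx1]
    nlinarith

theorem cot_add_self_lt_pi_div_three_mul (h0 : 0 < x) (hx : 2 * x ^ 2 < π - 3) :
    cot x + x < π / (3 * x) := by
  have hxπ : x < π := by nlinarith [pi_le_four]
  calc cot x + x < x⁻¹ - x / 3 + x := by linarith [cot_lt_inv_sub_div_three h0 hxπ]
    _ = (3 + 2 * x ^ 2) / (3 * x) := by field_simp; ring
    _ < π / (3 * x) := by gcongr; linarith

theorem pi_div_four_mul_lt_cot_add_self (h0 : 0 < x) (hx : x < π / 2) :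
    π / (4 * x) < cot x + x :=
  calc π / (4 * x) ≤ x⁻¹ := by
        rw [div_le_iff₀ (by positivity), inv_mul_eq_div, le_div_iff₀ h0]; nlinarith [pi_le_four]
    _ < cot x + x := by linarith [inv_sub_self_lt_cot h0 hx]

end CotBounds

end Real

theorem stmt_18 (n : ℕ) (hn : 2 ≤ n) :
    (∃! γ : ℝ, γ ∈ Set.Ioo (((n : ℝ) - 1/2)*π - π/2) (((n : ℝ) - 1/2)*π) ∧
      Real.tan γ = γ) ∧
    (∀ γ ∈ Set.Ioo (((n : ℝ) - 1/2)*π - π/2) (((n : ℝ) - 1/2)*π),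
      Real.tan γ = γ →
      ((n : ℝ) - 1/2)*π - 1/(3*((n : ℝ) - 1/2)) < γ ∧
      γ < ((n : ℝ) - 1/2)*π - 1/(4*((n : ℝ) - 1/2))) := by
  generalize hb_def : (n : ℝ) - 1 / 2 = b
  have hb : 3 / 2 ≤ b := by
    rw [← hb_def]
    linarith [show (2 : ℝ) ≤ n by exact_mod_cast hn]
  obtain ⟨k, hk⟩ : ∃ k : ℤ, b * π = k * π + π / 2 := ⟨n - 1, by rw [← hb_def]; push_cast; ring⟩
  have hI : Ioo (b * π - π / 2) (b * π) = Ioo (k * π) (k * π + π / 2) := by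
    rw [hk, add_sub_cancel_right]
  have htan (x : ℝ) : tan (b * π - x) - (b * π - x) = cot x + x - b * π := by
    rw [hk, tan_int_mul_pi_add_pi_div_two_sub]
    ring
  have hπ := pi_gt_d2
  have h₃ : 0 < 1 / (3 * b) ∧ 1 / (3 * b) ≤ 2 / 9 :=
    ⟨by positivity, by rw [div_le_iff₀ (by positivity)]; linarith⟩
  have h₄ : 0 < 1 / (4 * b) ∧ 1 / (4 * b) ≤ 1 / 6 :=
    ⟨by positivity, by rw [div_le_iff₀ (by positivity)]; linarith⟩
  have hlower : cot (1 / (3 * b)) + 1 / (3 * b) < b * π := by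
    have h := cot_add_self_lt_pi_div_three_mul h₃.1
      (by nlinarith [pow_le_pow_left₀ h₃.1.le h₃.2 2])
    rwa [show π / (3 * (1 / (3 * b))) = b * π by field_simp] at h
  have hupper : b * π < cot (1 / (4 * b)) + 1 / (4 * b) := by
    have h := pi_div_four_mul_lt_cot_add_self h₄.1 (by linarith)
    rwa [show π / (4 * (1 / (4 * b))) = b * π by field_simp] at h
  have key := (strictMonoOn_tan_sub_self k).existsUnique_eq_and_mem_Ioo
    (continuousOn_tan_sub_self k) (p := b * π - 1 / (3 * b)) (q := b * π - 1 / (4 * b)) (y := 0)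
    (by rw [← hI]; constructor <;> linarith) (by rw [← hI]; constructor <;> linarith)
    (by simp only [htan]; linarith) (by simp only [htan]; linarith)
  rw [hI]
  simpa only [sub_eq_zero] using key
end

section
/- The function γ ↦ sin(γ/2)/√(1 - sin(γ)/γ) is strictly decreasing on (0, π), equals 1 at γ = π, and tends to √(3/2) as γ → 0⁺. -/
/-!
On `(0, π]` the function equals `√(amplitudeSq γ)`, where
`amplitudeSq γ = γ (1 - cos γ) / (2 (γ - sin γ))`. The derivative of `amplitudeSq` has the sign
of `γ² sin γ - (1 - cos γ)(γ + sin γ)`; with `u = γ / 2` this is negative iff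
`2u² - sin² u < u tan u`, which follows from `sin u > u - u³/6` and `tan u > u + u³/3`.
The limit `3/2` at `0⁺` comes from `1 - cos γ ~ γ²/2` and `γ - sin γ ~ γ³/6`.
-/

open Real Filter Set Topology

lemma add_cube_div_three_lt_tan {x : ℝ} (h0 : 0 < x) (hx : x < π / 2) : x + x ^ 3 / 3 < tan x := by
  have hcos {y : ℝ} (hy : y ∈ Ico 0 (π / 2)) : cos y ≠ 0 :=
    (cos_pos_of_mem_Ioo ⟨by linarith [pi_pos, hy.1], hy.2⟩).ne'
  have hmono : StrictMonoOn (fun y => tan y - y - y ^ 3 / 3) (Ico 0 (π / 2)) := by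
    refine strictMonoOn_of_hasDerivWithinAt_pos (convex_Ico 0 (π / 2))
      (f' := fun y => 1 / cos y ^ 2 - 1 - y ^ 2) ?_ (fun y hy => ?_) (fun y hy => ?_)
    · exact ((continuousOn_tan.mono fun y hy => hcos hy).sub continuousOn_id).sub (by fun_prop)
    · rw [interior_Ico] at hy
      have := (((hasDerivAt_tan (hcos (Ioo_subset_Ico_self hy))).sub (hasDerivAt_id y)).sub
        ((hasDerivAt_pow 3 y).div_const 3))
      exact (this.congr_deriv (by simp)).hasDerivWithinAt
    · rw [interior_Ico] at hy
      have hsec : 1 / cos y ^ 2 = 1 + tan y ^ 2 := by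
        rw [← inv_one_add_tan_sq (hcos (Ioo_subset_Ico_self hy)), one_div, inv_inv]
      have := lt_tan hy.1 hy.2
      simp only [hsec]
      nlinarith [hy.1]
  have := hmono ⟨le_rfl, by positivity⟩ ⟨h0.le, hx⟩ h0
  simp only [tan_zero] at this
  linarith

lemma two_mul_sq_sub_sin_sq_lt_mul_tan {x : ℝ} (h0 : 0 < x) (hx : x < π / 2) :
    2 * x ^ 2 - sin x ^ 2 < x * tan x := by
  have hx2 : x < 2 := by linarith [pi_lt_four]
  have hcube : 0 < x - x ^ 3 / 6 := by
    have : 0 < x * (6 - x ^ 2) := mul_pos h0 (by nlinarith)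
    linarith
  have hsin : (x - x ^ 3 / 6) ^ 2 < sin x ^ 2 :=
    pow_lt_pow_left₀ (sin_gt_sub_cube h0) hcube.le two_ne_zero
  nlinarith [add_cube_div_three_lt_tan h0 hx, pow_pos h0 6]

lemma sq_mul_sin_lt_one_sub_cos_mul_add_sin {x : ℝ} (h0 : 0 < x) (hx : x < π) :
    x ^ 2 * sin x < (1 - cos x) * (x + sin x) := by
  obtain ⟨u, rfl⟩ : ∃ u, x = 2 * u := ⟨x / 2, by ring⟩
  have hu0 : 0 < u := by linarith
  have hu : u < π / 2 := by linarith
  have hsin : 0 < sin u := sin_pos_of_pos_of_lt_pi hu0 (by linarith [pi_pos])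
  have hcos : 0 < cos u := cos_pos_of_mem_Ioo ⟨by linarith, hu⟩
  have key := two_mul_sq_sub_sin_sq_lt_mul_tan hu0 hu
  rw [tan_eq_sin_div_cos, mul_div_assoc', lt_div_iff₀ hcos] at key
  rw [sin_two_mul, cos_two_mul, cos_sq']
  nlinarith [mul_lt_mul_of_pos_left key hsin]

noncomputable def amplitudeSq (γ : ℝ) : ℝ := γ * (1 - cos γ) / (2 * (γ - sin γ))

lemma amplitudeSq_nonneg {γ : ℝ} (h : 0 ≤ γ) : 0 ≤ amplitudeSq γ :=
  div_nonneg (mul_nonneg h (sub_nonneg.2 (cos_le_one γ)))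
    (mul_nonneg zero_le_two (sub_nonneg.2 (sin_le h)))

lemma hasDerivAt_amplitudeSq {x : ℝ} (hx : 0 < x) :
    HasDerivAt amplitudeSq
      ((x ^ 2 * sin x - (1 - cos x) * (x + sin x)) / (2 * (x - sin x) ^ 2)) x := by
  have hq : x - sin x ≠ 0 := by linarith [sin_lt hx]
  have hp : HasDerivAt (fun y => y * (1 - cos y)) (1 - cos x + x * sin x) x :=
    ((hasDerivAt_id' x).mul ((hasDerivAt_cos x).const_sub 1)).congr_deriv (by ring)
  have hq' : HasDerivAt (fun y => 2 * (y - sin y)) (2 * (1 - cos x)) x :=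
    ((hasDerivAt_id' x).sub (hasDerivAt_sin x)).const_mul 2
  refine (hp.div hq' (mul_ne_zero two_ne_zero hq)).congr_deriv ?_
  field_simp
  linear_combination (-x) * (sin_sq_add_cos_sq x)

lemma strictAntiOn_amplitudeSq : StrictAntiOn amplitudeSq (Ioo 0 π) := by
  refine strictAntiOn_of_hasDerivWithinAt_neg (convex_Ioo 0 π)
    (fun x hx => (hasDerivAt_amplitudeSq hx.1).continuousAt.continuousWithinAt)
    (fun x hx => (hasDerivAt_amplitudeSq (interior_subset hx).1).hasDerivWithinAt) ?_
  rw [interior_Ioo]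
  intro x hx
  have hsub : 0 < x - sin x := sub_pos.2 (sin_lt hx.1)
  exact div_neg_of_neg_of_pos (sub_neg.2 (sq_mul_sin_lt_one_sub_cos_mul_add_sin hx.1 hx.2))
    (by positivity)

lemma sin_half_div_sqrt_eq_sqrt_amplitudeSq {γ : ℝ} (h0 : 0 < γ) (hγ : γ ≤ π) :
    sin (γ / 2) / √(1 - sin γ / γ) = √(amplitudeSq γ) := by
  have hsin : 0 ≤ sin (γ / 2) :=
    sin_nonneg_of_nonneg_of_le_pi (by linarith) (by linarith [pi_pos])
  have hsub : γ - sin γ ≠ 0 := (sub_pos.2 (sin_lt h0)).ne'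
  rw [← sqrt_sq hsin, ← sqrt_div' _ (sub_pos.2 ((div_lt_one h0).2 (sin_lt h0))).le, amplitudeSq,
    sin_sq_eq_half_sub, mul_div_cancel₀ _ two_ne_zero]
  congr 1
  field_simp

lemma tendsto_of_abs_sub_le_mul_sq {l : Filter ℝ} (hl : l ≤ 𝓝 0) {u : ℝ → ℝ} {L C : ℝ}
    (h : ∀ᶠ x in l, |u x - L| ≤ C * x ^ 2) : Tendsto u l (𝓝 L) := by
  have hC : Tendsto (fun x : ℝ => C * x ^ 2) l (𝓝 0) := by
    have : Continuous fun x : ℝ => C * x ^ 2 := by fun_prop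
    simpa using (this.tendsto 0).mono_left hl
  exact tendsto_iff_norm_sub_tendsto_zero.2
    (squeeze_zero' (.of_forall fun _ => norm_nonneg _) h hC)

lemma eventually_abs_le_one : ∀ᶠ x in 𝓝 (0 : ℝ), |x| ≤ 1 :=
  eventually_of_mem (Icc_mem_nhds (by norm_num) one_pos) fun _ hx => abs_le.2 hx

lemma tendsto_one_sub_cos_div_sq :
    Tendsto (fun x => (1 - cos x) / x ^ 2) (𝓝[≠] 0) (𝓝 (1 / 2)) := by
  refine tendsto_of_abs_sub_le_mul_sq (C := 5 / 96) nhdsWithin_le_nhds ?_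
  filter_upwards [self_mem_nhdsWithin, nhdsWithin_le_nhds eventually_abs_le_one]
    with x (hx0 : x ≠ 0) hx1
  have hx2 : 0 < x ^ 2 := by positivity
  have := cos_bound hx1
  rw [show (1 - cos x) / x ^ 2 - 1 / 2 = -(cos x - (1 - x ^ 2 / 2)) / x ^ 2 by field_simp; ring,
    abs_div, abs_neg, abs_of_pos hx2, div_le_iff₀ hx2]
  calc _ ≤ |x| ^ 4 * (5 / 96) := this
    _ = 5 / 96 * x ^ 2 * x ^ 2 := by rw [show |x| ^ 4 = (|x| ^ 2) ^ 2 by ring, sq_abs]; ring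

lemma tendsto_sub_sin_div_cube :
    Tendsto (fun x => (x - sin x) / x ^ 3) (𝓝[≠] 0) (𝓝 (1 / 6)) := by
  refine tendsto_of_abs_sub_le_mul_sq (C := 1 / 100) nhdsWithin_le_nhds ?_
  filter_upwards [self_mem_nhdsWithin, nhdsWithin_le_nhds eventually_abs_le_one]
    with x (hx0 : x ≠ 0) hx1
  have hx3 : 0 < |x| ^ 3 := by positivity
  have := sin_bound hx1
  rw [show (x - sin x) / x ^ 3 - 1 / 6 = -(sin x - (x - x ^ 3 / 6)) / x ^ 3 by field_simp; ring,
    abs_div, abs_neg, abs_pow, div_le_iff₀ hx3]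
  calc _ ≤ |x| ^ 5 / 100 := this
    _ = 1 / 100 * x ^ 2 * |x| ^ 3 := by rw [← sq_abs x]; ring

lemma tendsto_amplitudeSq : Tendsto amplitudeSq (𝓝[>] 0) (𝓝 (3 / 2)) := by
  have hle : 𝓝[>] (0 : ℝ) ≤ 𝓝[≠] 0 := nhdsWithin_mono _ fun x hx => ne_of_gt hx
  have h : Tendsto (fun x => (1 - cos x) / x ^ 2 / (2 * ((x - sin x) / x ^ 3))) (𝓝[>] 0)
      (𝓝 (1 / 2 / (2 * (1 / 6)))) :=
    (tendsto_one_sub_cos_div_sq.mono_left hle).div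
      ((tendsto_sub_sin_div_cube.mono_left hle).const_mul 2) (by norm_num)
  rw [show (1 / 2 / (2 * (1 / 6)) : ℝ) = 3 / 2 by norm_num] at h
  refine h.congr' ?_
  filter_upwards [self_mem_nhdsWithin] with x (hx : 0 < x)
  rw [amplitudeSq]
  field_simp

theorem stmt_19 :
    StrictAntiOn (fun γ : ℝ => Real.sin (γ/2) / Real.sqrt (1 - Real.sin γ / γ))
      (Set.Ioo 0 π) ∧
    Real.sin (π/2) / Real.sqrt (1 - Real.sin π / π) = 1 ∧
    Tendsto (fun γ : ℝ => Real.sin (γ/2) / Real.sqrt (1 - Real.sin γ / γ))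
      (nhdsWithin 0 (Set.Ioi 0)) (nhds (Real.sqrt (3/2))) := by
  refine ⟨fun a ha b hb hab => ?_, by simp, ?_⟩
  · dsimp only
    rw [sin_half_div_sqrt_eq_sqrt_amplitudeSq ha.1 ha.2.le,
      sin_half_div_sqrt_eq_sqrt_amplitudeSq hb.1 hb.2.le]
    exact sqrt_lt_sqrt (amplitudeSq_nonneg hb.1.le) (strictAntiOn_amplitudeSq ha hb hab)
  · refine ((continuous_sqrt.tendsto _).comp tendsto_amplitudeSq).congr' ?_
    filter_upwards [Ioo_mem_nhdsGT pi_pos] with γ hγ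
    exact (sin_half_div_sqrt_eq_sqrt_amplitudeSq hγ.1 hγ.2.le).symm
end
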